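/- Suppose n ≥ 1 is an integer and λ ∈ (0,1) is such that λn is an integer. Then the binomial coefficient satisfies C(n, λn) ≤ (1/√(2π·n·λ·(1−λ)))·2^{n·H₂(λ)}. -/

import Mathlib

open Stirling Real Filter Topology

/-- The binary entropy function `H₂(λ) = -λ·log₂ λ - (1-λ)·log₂(1-λ)`. -/
noncomputable def H2 (r : ℝ) : ℝ := -r * Real.logb 2 r - (1 - r) * Real.logb 2 (1 - r)

lemma diff_le (q : ℕ) :
    Real.log (stirlingSeq (q+1)) - Real.log (stirlingSeq (q+2)) ≤
      1/(4*((q:ℝ)+1)) - 1/(4*((q:ℝ)+2)) := by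
  have h := Stirling.log_stirlingSeq_diff_le_geo_sum q
  refine h.trans (le_of_eq ?_)
  have hc : (0:ℝ) < 2*((q:ℝ)+1)+1 := by positivity
  have h2 : (1:ℝ) - (1/(2*(↑(q+1):ℝ)+1))^2 ≠ 0 := by
    push_cast
    rw [sub_ne_zero]
    intro h'
    have : ((2*((q:ℝ)+1)+1))^2 = 1 := by
      field_simp at h'
      nlinarith [h']
    nlinarith
  push_cast at h2 ⊢
  field_simp
  ring_nf
  field_simp
  ring

lemma le_diff (q : ℕ) :
    1/(12*((q:ℝ)+1)+6) - 1/(12*((q:ℝ)+2)+6) ≤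
      Real.log (stirlingSeq (q+1)) - Real.log (stirlingSeq (q+2)) := by
  have h := Stirling.log_stirlingSeq_diff_hasSum q
  have h0 := le_hasSum h 0 (fun j _ => by positivity)
  refine le_trans ?_ h0
  have hc : (0:ℝ) < 2*((q:ℝ)+1)+1 := by positivity
  push_cast
  norm_num
  rw [inv_le_iff_one_le_mul₀ (by positivity)]
  have hq : (0:ℝ) ≤ (q:ℝ) := q.cast_nonneg
  field_simp
  nlinarith [sq_nonneg ((q:ℝ)), hq, mul_nonneg hq hq, mul_nonneg (mul_nonneg hq hq) hq]

lemma diff_le' (p : ℕ) (hp : 1 ≤ p) :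
    Real.log (stirlingSeq p) - Real.log (stirlingSeq (p+1)) ≤
      1/(4*(p:ℝ)) - 1/(4*((p:ℝ)+1)) := by
  obtain ⟨q, rfl⟩ : ∃ q, p = q + 1 := ⟨p - 1, by omega⟩
  have := diff_le q
  push_cast at this ⊢
  convert this using 3 <;> ring

lemma le_diff' (p : ℕ) (hp : 1 ≤ p) :
    1/(12*(p:ℝ)+6) - 1/(12*((p:ℝ)+1)+6) ≤
      Real.log (stirlingSeq p) - Real.log (stirlingSeq (p+1)) := by
  obtain ⟨q, rfl⟩ : ∃ q, p = q + 1 := ⟨p - 1, by omega⟩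
  have := le_diff q
  push_cast at this ⊢
  convert this using 3 <;> ring

lemma tele_up (p : ℕ) (hp : 1 ≤ p) :
    ∀ N, p ≤ N → Real.log (stirlingSeq p) - 1/(4*(p:ℝ)) ≤
      Real.log (stirlingSeq N) - 1/(4*(N:ℝ)) := by
  intro N hN
  induction N, hN using Nat.le_induction with
  | base => exact le_refl _
  | succ N hN ih =>
    refine ih.trans ?_
    have h := diff_le' N (hp.trans hN)
    push_cast
    linarith

lemma tele_lo (p : ℕ) (hp : 1 ≤ p) :
    ∀ N, p ≤ N → Real.log (stirlingSeq N) - 1/(12*(N:ℝ)+6) ≤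
      Real.log (stirlingSeq p) - 1/(12*(p:ℝ)+6) := by
  intro N hN
  induction N, hN using Nat.le_induction with
  | base => exact le_refl _
  | succ N hN ih =>
    refine le_trans ?_ ih
    have h := le_diff' N (hp.trans hN)
    push_cast
    linarith

lemma tendsto_log_stirling :
    Tendsto (fun N : ℕ => Real.log (stirlingSeq N)) atTop (𝓝 (Real.log (Real.sqrt π))) :=
  Stirling.tendsto_stirlingSeq_sqrt_pi.log (by positivity)

lemma E_upper (p : ℕ) (hp : 1 ≤ p) :
    Real.log (stirlingSeq p) ≤ Real.log (Real.sqrt π) + 1/(4*(p:ℝ)) := by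
  have h4 : Tendsto (fun N : ℕ => 1/(4*(N:ℝ))) atTop (𝓝 0) := by
    have : Tendsto (fun N : ℕ => 4*(N:ℝ)) atTop atTop :=
      (tendsto_natCast_atTop_atTop).const_mul_atTop (by norm_num)
    have h := this.inv_tendsto_atTop
    refine h.congr (fun N => ?_)
    simp [one_div]
  have hseq : Tendsto (fun N : ℕ => Real.log (stirlingSeq N) - 1/(4*(N:ℝ))) atTop
      (𝓝 (Real.log (Real.sqrt π) - 0)) := tendsto_log_stirling.sub h4
  have := ge_of_tendsto hseq (eventually_atTop.2 ⟨p, fun N hN => tele_up p hp N hN⟩)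
  linarith

lemma E_lower (p : ℕ) (hp : 1 ≤ p) :
    Real.log (Real.sqrt π) + 1/(12*(p:ℝ)+6) ≤ Real.log (stirlingSeq p) := by
  have h4 : Tendsto (fun N : ℕ => 1/(12*(N:ℝ)+6)) atTop (𝓝 0) := by
    have : Tendsto (fun N : ℕ => 12*(N:ℝ)+6) atTop atTop :=
      Filter.tendsto_atTop_add_const_right _ _
        ((tendsto_natCast_atTop_atTop).const_mul_atTop (by norm_num))
    have h := this.inv_tendsto_atTop
    refine h.congr (fun N => ?_)
    simp [one_div]
  have hseq : Tendsto (fun N : ℕ => Real.log (stirlingSeq N) - 1/(12*(N:ℝ)+6)) atTop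
      (𝓝 (Real.log (Real.sqrt π) - 0)) := tendsto_log_stirling.sub h4
  have := le_of_tendsto hseq (eventually_atTop.2 ⟨p, fun N hN => tele_lo p hp N hN⟩)
  linarith

lemma spos (p : ℕ) (hp : 1 ≤ p) : 0 < stirlingSeq p := by
  obtain ⟨q, rfl⟩ : ∃ q, p = q + 1 := ⟨p - 1, by omega⟩
  exact Stirling.stirlingSeq'_pos q

lemma stirlingSeq_two : stirlingSeq 2 = Real.exp 1 ^ 2 / 4 := by
  rw [stirlingSeq]
  have h4 : Real.sqrt (2 * ((2:ℕ):ℝ)) = 2 := by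
    rw [show (2 * ((2:ℕ):ℝ)) = 2^2 by norm_num, Real.sqrt_sq (by norm_num)]
  rw [h4]
  rw [div_pow]
  have he : Real.exp 1 ≠ 0 := (Real.exp_pos 1).ne'
  norm_num [Nat.factorial]
  field_simp

lemma sqrtpi_mul_le (k m : ℕ) (hk : 1 ≤ k) (hm : 1 ≤ m) :
    Real.sqrt π * stirlingSeq (k+m) ≤ stirlingSeq k * stirlingSeq m := by
  by_cases hkm : k = 1 ∧ m = 1
  · obtain ⟨rfl, rfl⟩ := hkm
    rw [show (1+1 : ℕ) = 2 from rfl, stirlingSeq_two, Stirling.stirlingSeq_one]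
    have h2 : Real.sqrt π ≤ 2 := by
      rw [show (2:ℝ) = Real.sqrt 4 by
        rw [show (4:ℝ) = 2^2 by norm_num, Real.sqrt_sq (by norm_num)]]
      exact Real.sqrt_le_sqrt (by linarith [Real.pi_le_four])
    have he : (0:ℝ) < Real.exp 1 ^ 2 := by positivity
    have hs2 : Real.sqrt 2 > 0 := by positivity
    have hsq : Real.exp 1 / Real.sqrt 2 * (Real.exp 1 / Real.sqrt 2)
        = Real.exp 1 ^ 2 / 2 := by
      rw [div_mul_div_comm, Real.mul_self_sqrt (by norm_num : (0:ℝ) ≤ 2)]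
      ring
    rw [hsq]
    nlinarith [mul_le_mul_of_nonneg_right h2 he.le]
  · -- main case: k + m ≥ 3
    have hn3 : 3 ≤ k + m := by
      rcases Nat.lt_or_ge k 2 with h | h
      · rcases Nat.lt_or_ge m 2 with h' | h'
        · omega
        · omega
      · omega
    have hKM : (3:ℝ) ≤ (k:ℝ) + (m:ℝ) := by exact_mod_cast hn3
    have hK1 : (1:ℝ) ≤ (k:ℝ) := by exact_mod_cast hk
    have hM1 : (1:ℝ) ≤ (m:ℝ) := by exact_mod_cast hm
    have hrat : 1/(4*((k:ℝ)+(m:ℝ))) ≤ 1/(12*(k:ℝ)+6) + 1/(12*(m:ℝ)+6) := by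
      rw [div_add_div _ _ (by positivity) (by positivity),
        div_le_div_iff₀ (by positivity) (by positivity)]
      nlinarith [sq_nonneg ((k:ℝ) - (m:ℝ)), mul_nonneg (sub_nonneg.2 hKM)
        (by positivity : (0:ℝ) ≤ (k:ℝ)+(m:ℝ)+1)]
    have hu := E_upper (k+m) (by omega)
    have hlk := E_lower k hk
    have hlm := E_lower m hm
    have hcast : ((k+m : ℕ) : ℝ) = (k:ℝ) + (m:ℝ) := by push_cast; ring
    rw [hcast] at hu
    have hlog : Real.log (Real.sqrt π * stirlingSeq (k+m)) ≤
        Real.log (stirlingSeq k * stirlingSeq m) := by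
      rw [Real.log_mul (by positivity) (spos _ (by omega)).ne',
        Real.log_mul (spos _ hk).ne' (spos _ hm).ne']
      linarith
    have h1 : (0:ℝ) < Real.sqrt π * stirlingSeq (k+m) :=
      mul_pos (by positivity) (spos _ (by omega))
    exact (Real.log_le_log_iff h1 (mul_pos (spos _ hk) (spos _ hm))).1 hlog

lemma factorial_eq (p : ℕ) (hp : 1 ≤ p) :
    ((p.factorial : ℕ) : ℝ) = stirlingSeq p * (Real.sqrt (2*(p:ℝ)) * ((p:ℝ)/Real.exp 1)^p) := by
  have hP : (0:ℝ) < (p:ℝ) := by exact_mod_cast hp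
  have hD : (0:ℝ) < Real.sqrt (2*(p:ℝ)) * ((p:ℝ)/Real.exp 1)^p :=
    mul_pos (Real.sqrt_pos.2 (by linarith)) (pow_pos (div_pos hP (Real.exp_pos 1)) p)
  rw [stirlingSeq, div_mul_cancel₀ _ hD.ne']

lemma sqrt_prod_eq (k m : ℕ) (hk : 1 ≤ k) (hm : 1 ≤ m) :
    Real.sqrt (2*((k:ℝ)+(m:ℝ))) * (((k:ℝ)+(m:ℝ))/Real.exp 1)^(k+m) /
      (Real.sqrt π * (Real.sqrt (2*(k:ℝ)) * ((k:ℝ)/Real.exp 1)^k) *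
        (Real.sqrt (2*(m:ℝ)) * ((m:ℝ)/Real.exp 1)^m)) =
    Real.sqrt (((k:ℝ)+(m:ℝ))/(2*π*(k:ℝ)*(m:ℝ))) *
      (((k:ℝ)+(m:ℝ))^(k+m) / ((k:ℝ)^k * (m:ℝ)^m)) := by
  have hK : (0:ℝ) < (k:ℝ) := by exact_mod_cast hk
  have hM : (0:ℝ) < (m:ℝ) := by exact_mod_cast hm
  have hpi : (0:ℝ) < π := Real.pi_pos
  have hsk : (0:ℝ) < Real.sqrt (k:ℝ) := Real.sqrt_pos.2 hK
  have hsm : (0:ℝ) < Real.sqrt (m:ℝ) := Real.sqrt_pos.2 hM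
  have hsn : (0:ℝ) < Real.sqrt ((k:ℝ)+(m:ℝ)) := Real.sqrt_pos.2 (by linarith)
  have hspi : (0:ℝ) < Real.sqrt π := Real.sqrt_pos.2 hpi
  have hs2 : (0:ℝ) < Real.sqrt 2 := Real.sqrt_pos.2 (by norm_num)
  have he : (0:ℝ) < Real.exp 1 := Real.exp_pos 1
  rw [Real.sqrt_mul (by norm_num : (0:ℝ) ≤ 2) ((k:ℝ)+(m:ℝ)),
      Real.sqrt_mul (by norm_num : (0:ℝ) ≤ 2) (k:ℝ),
      Real.sqrt_mul (by norm_num : (0:ℝ) ≤ 2) (m:ℝ)]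
  rw [Real.sqrt_div (by positivity) (2*π*(k:ℝ)*(m:ℝ))]
  rw [show (2*π*(k:ℝ)*(m:ℝ)) = 2*(π*((k:ℝ)*(m:ℝ))) by ring]
  rw [Real.sqrt_mul (by norm_num : (0:ℝ) ≤ 2) (π*((k:ℝ)*(m:ℝ))),
      Real.sqrt_mul hpi.le ((k:ℝ)*(m:ℝ)),
      Real.sqrt_mul hK.le (m:ℝ)]
  rw [div_pow, div_pow, div_pow, pow_add (Real.exp 1)]
  have hek : (0:ℝ) < Real.exp 1 ^ k := by positivity
  have hem : (0:ℝ) < Real.exp 1 ^ m := by positivity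
  have hKk : (0:ℝ) < (k:ℝ)^k := by positivity
  have hMm : (0:ℝ) < (m:ℝ)^m := by positivity
  field_simp

lemma chooseA (k m : ℕ) (hk : 1 ≤ k) (hm : 1 ≤ m) :
    (((k+m).choose k : ℕ) : ℝ) ≤
      Real.sqrt (((k:ℝ)+(m:ℝ))/(2*π*(k:ℝ)*(m:ℝ))) *
        (((k:ℝ)+(m:ℝ))^(k+m) / ((k:ℝ)^k * (m:ℝ)^m)) := by
  have hK : (0:ℝ) < (k:ℝ) := by exact_mod_cast hk
  have hM : (0:ℝ) < (m:ℝ) := by exact_mod_cast hm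
  have he : (0:ℝ) < Real.exp 1 := Real.exp_pos 1
  have hspi : (0:ℝ) < Real.sqrt π := Real.sqrt_pos.2 Real.pi_pos
  set a := Real.sqrt (2*(k:ℝ)) * ((k:ℝ)/Real.exp 1)^k with ha
  set b := Real.sqrt (2*(m:ℝ)) * ((m:ℝ)/Real.exp 1)^m with hb
  set c := Real.sqrt (2*((k:ℝ)+(m:ℝ))) * (((k:ℝ)+(m:ℝ))/Real.exp 1)^(k+m) with hc
  have hapos : 0 < a := mul_pos (Real.sqrt_pos.2 (by linarith)) (pow_pos (by positivity) k)
  have hbpos : 0 < b := mul_pos (Real.sqrt_pos.2 (by linarith)) (pow_pos (by positivity) m)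
  have hcpos : 0 < c := mul_pos (Real.sqrt_pos.2 (by linarith)) (pow_pos (by positivity) (k+m))
  have hskpos := spos k hk
  have hsmpos := spos m hm
  have hsnpos := spos (k+m) (by omega)
  have hcast : (((k+m).choose k : ℕ) : ℝ) =
      (((k+m).factorial : ℕ) : ℝ) / (((k.factorial : ℕ) : ℝ) * ((m.factorial : ℕ) : ℝ)) := by
    rw [Nat.cast_choose ℝ (Nat.le_add_right k m), Nat.add_sub_cancel_left]
  have hfn : (((k+m).factorial : ℕ) : ℝ) = stirlingSeq (k+m) * c := by
    rw [factorial_eq (k+m) (by omega)]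
    push_cast
    rfl
  rw [hcast, hfn, factorial_eq k hk, factorial_eq m hm, ← ha, ← hb,
    ← sqrt_prod_eq k m hk hm, ← hc]
  rw [div_le_div_iff₀ (by positivity) (by positivity)]
  calc stirlingSeq (k+m) * c * (Real.sqrt π * a * b)
      = (Real.sqrt π * stirlingSeq (k+m)) * (c * a * b) := by ring
    _ ≤ (stirlingSeq k * stirlingSeq m) * (c * a * b) :=
        mul_le_mul_of_nonneg_right (sqrtpi_mul_le k m hk hm) (by positivity)
    _ = c * (stirlingSeq k * a * (stirlingSeq m * b)) := by ring

/-- if `n ≥ 1`, `λ ∈ (0,1)` and `λn` is an integer `k`, then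
`C(n, λn) ≤ (1/√(2π·n·λ·(1−λ)))·2^{n·H₂(λ)}`. -/
theorem choose_le_entropy_bound (n : ℕ) (hn : 1 ≤ n) (lam : ℝ) (hlam0 : 0 < lam)
    (hlam1 : lam < 1) (k : ℕ) (hk : (k : ℝ) = lam * n) :
    (n.choose k : ℝ) ≤
      (1 / Real.sqrt (2 * Real.pi * n * lam * (1 - lam))) * 2 ^ ((n : ℝ) * H2 lam) := by
  have hn0 : (0:ℝ) < n := by exact_mod_cast hn
  have hK0 : (0:ℝ) < (k:ℝ) := by rw [hk]; positivity
  have hk1 : 1 ≤ k := by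
    by_contra h
    push_neg at h
    interval_cases k
    · simp at hK0
  have hkn : k < n := by
    have : (k:ℝ) < (n:ℝ) := by rw [hk]; nlinarith
    exact_mod_cast this
  set m := n - k with hmdef
  have hkm : k + m = n := by omega
  have hm1 : 1 ≤ m := by omega
  have hMc : (m:ℝ) = (n:ℝ) - (k:ℝ) := by
    rw [hmdef, Nat.cast_sub hkn.le]
  have hM : (m:ℝ) = (1 - lam)*(n:ℝ) := by rw [hMc, hk]; ring
  have hM0 : (0:ℝ) < (m:ℝ) := by exact_mod_cast hm1
  have hNKM : (k:ℝ) + (m:ℝ) = (n:ℝ) := by rw [hMc]; ring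
  have hlam : lam = (k:ℝ)/(n:ℝ) := by rw [hk]; field_simp
  have hlam' : (1:ℝ) - lam = (m:ℝ)/(n:ℝ) := by rw [hM]; field_simp
  have h1 : 2*π*(n:ℝ)*lam*(1-lam) = 2*π*(k:ℝ)*(m:ℝ)/(n:ℝ) := by
    rw [hlam', hlam]; field_simp
  have h2 : 1 / Real.sqrt (2*π*(n:ℝ)*lam*(1-lam)) =
      Real.sqrt ((n:ℝ)/(2*π*(k:ℝ)*(m:ℝ))) := by
    rw [h1, one_div, ← Real.sqrt_inv, inv_div]
  have hl2 : Real.log 2 ≠ 0 := (Real.log_pos (by norm_num)).ne'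
  have h3 : (2:ℝ) ^ ((n:ℝ) * H2 lam) = ((n:ℝ))^n / ((k:ℝ)^k * (m:ℝ)^m) := by
    have hrhs : (0:ℝ) < ((n:ℝ))^n / ((k:ℝ)^k * (m:ℝ)^m) := by positivity
    rw [Real.rpow_def_of_pos (by norm_num : (0:ℝ) < 2), ← Real.exp_log hrhs]
    congr 1
    rw [Real.log_div (by positivity) (by positivity),
        Real.log_mul (by positivity) (by positivity),
        Real.log_pow, Real.log_pow, Real.log_pow]
    simp only [H2]
    rw [hlam', hlam, Real.logb, Real.logb,
        Real.log_div hK0.ne' hn0.ne', Real.log_div hM0.ne' hn0.ne']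
    have hN : (n:ℝ) = (k:ℝ) + (m:ℝ) := hNKM.symm
    rw [hN]
    have hKM0 : (k:ℝ) + (m:ℝ) ≠ 0 := by positivity
    field_simp
    ring
  rw [h2, h3]
  have hc := chooseA k m hk1 hm1
  rw [hNKM, hkm] at hc
  exact hc
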